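/- The compressed automaton (U_c, F_c) simulates (U, F) via the relation R = { (u, û) ∈ U × U_c : u_i ≥ û_i for all 1 ≤ i ≤ m }. That is: (i) the initial nodes are related, ⟨0,…,0⟩ R ⟨0,…,0⟩; and (ii) whenever (u, û) ∈ R, σ ∈ {0,1}, and (u, σ, u′) ∈ F, there exists û′ ∈ U_c such that (û, σ, û′) ∈ F_c and (u′, û′) ∈ R. -/
import Mathlib


/-- `Uset k m` : nonincreasing `m`-tuples with entries in `{0, …, k-m}`. -/
def Uset (k m : ℕ) : Set (Fin m → ℕ) :=
  {u | (∀ i, u i ≤ k - m) ∧ ∀ i j : Fin m, i ≤ j → u j ≤ u i}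

/-- `Ucset k m c` : states of the compressed automaton, i.e. the elements `u ∈ U`
such that `(u₁ - u₂) mod c = 0` or `u_m = 0`. -/
def Ucset (k m c : ℕ) (hm : 2 ≤ m) : Set (Fin m → ℕ) :=
  {u | u ∈ Uset k m ∧
    ((u ⟨0, by omega⟩ - u ⟨1, by omega⟩) % c = 0 ∨ u ⟨m - 1, by omega⟩ = 0)}

/-- The target of the `1`-transition: `⟨max(u₁-1,0), …, max(u_m-1,0)⟩`
(in `ℕ`, truncated subtraction realizes `max(· - 1, 0)`). -/
def oneStep (m : ℕ) (u : Fin m → ℕ) : Fin m → ℕ := fun i => u i - 1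

/-- The target of the `0`-transition of the compressed automaton:
`⟨u₀, u₁, …, u_{m-1}⟩` where `u₀ = k - m` if `u_{m-1} = 0` and
`u₀ = k - m - ((k - m - u₁) mod c)` otherwise. -/
def zeroStepC (k m c : ℕ) (hm : 2 ≤ m) (u : Fin m → ℕ) : Fin m → ℕ :=
  fun i => if (i : ℕ) = 0 then
      (if u ⟨m - 2, by omega⟩ = 0 then k - m
       else k - m - (k - m - u ⟨0, by omega⟩) % c)
    else u ⟨(i : ℕ) - 1, lt_of_le_of_lt (Nat.sub_le _ _) i.isLt⟩

/-- Membership in the transition set `F_c` of the compressed automaton `(U_c, F_c)`. -/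
def FcRel (k m c : ℕ) (hm : 2 ≤ m) (u : Fin m → ℕ) (σ : Bool) (u' : Fin m → ℕ) : Prop :=
  u ∈ Ucset k m c hm ∧
  ((σ = true ∧ u' = oneStep m u) ∨
   (σ = false ∧ u ⟨m - 1, by omega⟩ = 0 ∧ u' = zeroStepC k m c hm u))

/-- The target of the `0`-transition of the uncompressed automaton:
`⟨k-m, u₁, …, u_{m-1}⟩`. -/
def zeroStep (k m : ℕ) (u : Fin m → ℕ) : Fin m → ℕ :=
  fun i => if (i : ℕ) = 0 then k - m
    else u ⟨(i : ℕ) - 1, lt_of_le_of_lt (Nat.sub_le _ _) i.isLt⟩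

/-- Membership in the transition set `F` of the automaton `(U, F)`. -/
def Frel (k m : ℕ) (hm : 0 < m) (u : Fin m → ℕ) (σ : Bool) (u' : Fin m → ℕ) : Prop :=
  u ∈ Uset k m ∧
  ((σ = true ∧ u' = oneStep m u) ∨
   (σ = false ∧ u ⟨m - 1, Nat.sub_lt hm Nat.one_pos⟩ = 0 ∧ u' = zeroStep k m u))


theorem zeroStep_pos (k m : ℕ) (u : Fin m → ℕ) (i : Fin m) (hi : (i : ℕ) = 0) :
    zeroStep k m u i = k - m := if_pos hi

theorem zeroStep_ne (k m : ℕ) (u : Fin m → ℕ) (i : Fin m) (hi : (i : ℕ) ≠ 0) :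
    zeroStep k m u i = u ⟨(i : ℕ) - 1, lt_of_le_of_lt (Nat.sub_le _ _) i.isLt⟩ := if_neg hi

theorem zeroStepC_pos (k m c : ℕ) (hm : 2 ≤ m) (u : Fin m → ℕ) (i : Fin m)
    (hi : (i : ℕ) = 0) :
    zeroStepC k m c hm u i =
      (if u ⟨m - 2, by omega⟩ = 0 then k - m
       else k - m - (k - m - u ⟨0, by omega⟩) % c) := if_pos hi

theorem zeroStepC_ne (k m c : ℕ) (hm : 2 ≤ m) (u : Fin m → ℕ) (i : Fin m)
    (hi : (i : ℕ) ≠ 0) :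
    zeroStepC k m c hm u i = u ⟨(i : ℕ) - 1, lt_of_le_of_lt (Nat.sub_le _ _) i.isLt⟩ :=
  if_neg hi


theorem zeroStepC_inv_right (k m c : ℕ) (hm : 2 ≤ m) (u : Fin m → ℕ)
    (h2 : u ⟨m - 2, by omega⟩ = 0) :
    zeroStepC k m c hm u ⟨m - 1, by omega⟩ = 0 := by
  rw [zeroStepC_ne k m c hm u ⟨m - 1, by omega⟩ (by simp; omega)]
  have e : (⟨(((⟨m - 1, by omega⟩ : Fin m) : ℕ)) - 1,
      lt_of_le_of_lt (Nat.sub_le _ _) (by omega : m - 1 < m)⟩ : Fin m)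
      = ⟨m - 2, by omega⟩ := by
    apply Fin.ext; simp; omega
  rw [e]; exact h2

theorem zeroStepC_inv_left (k m c : ℕ) (hm : 2 ≤ m) (u : Fin m → ℕ)
    (h2 : ¬ u ⟨m - 2, by omega⟩ = 0) (ha : u ⟨0, by omega⟩ ≤ k - m) :
    (zeroStepC k m c hm u ⟨0, by omega⟩ - zeroStepC k m c hm u ⟨1, by omega⟩) % c = 0 := by
  rw [zeroStepC_pos k m c hm u ⟨0, by omega⟩ rfl,
    zeroStepC_ne k m c hm u ⟨1, by omega⟩ (by simp)]
  rw [if_neg h2]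
  have e : (⟨(((⟨1, by omega⟩ : Fin m) : ℕ)) - 1,
      lt_of_le_of_lt (Nat.sub_le _ _) (by omega : (1 : ℕ) < m)⟩ : Fin m)
      = ⟨0, by omega⟩ := rfl
  rw [e]
  set N := k - m with hN
  set a := u ⟨0, by omega⟩ with hadef
  have hx : N - (N - a) % c - a = c * ((N - a) / c) := by
    have := Nat.div_add_mod (N - a) c; omega
  rw [hx]
  exact Nat.mul_mod_right _ _

/-- `(U_c, F_c)` simulates `(U, F)` via the relation
`R = {(u, uhat) ∈ U × U_c : uhat_i ≤ u_i for all i}`: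
(i) the initial nodes `⟨0,…,0⟩` are related, and
(ii) every transition of `(U, F)` from `u` can be matched by a transition of
`(U_c, F_c)` from `uhat`, ending in a pair of `R`-related states. -/
theorem compressed_simulates (k m c : ℕ) (hm : 2 ≤ m) (hmk : m < k) (hc : 1 ≤ c) :
    (((fun _ => 0 : Fin m → ℕ) ∈ Uset k m) ∧
     ((fun _ => 0 : Fin m → ℕ) ∈ Ucset k m c hm) ∧
     (∀ i : Fin m, (fun _ => 0 : Fin m → ℕ) i ≤ (fun _ => 0 : Fin m → ℕ) i)) ∧
    (∀ u uhat : Fin m → ℕ, u ∈ Uset k m → uhat ∈ Ucset k m c hm → (∀ i, uhat i ≤ u i) →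
      ∀ (σ : Bool) (u' : Fin m → ℕ), Frel k m (by omega) u σ u' →
        ∃ uhat' : Fin m → ℕ, FcRel k m c hm uhat σ uhat' ∧
          u' ∈ Uset k m ∧ uhat' ∈ Ucset k m c hm ∧ ∀ i, uhat' i ≤ u' i) := by
  constructor
  · exact ⟨⟨fun i => Nat.zero_le _, fun i j _ => le_rfl⟩,
      ⟨⟨fun i => Nat.zero_le _, fun i j _ => le_rfl⟩, Or.inl (by simp)⟩,
      fun i => le_rfl⟩
  intro u uhat hu huhat hR σ u' hF
  obtain ⟨hu1, humono⟩ := hu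
  obtain ⟨⟨hh1, hhmono⟩, hhdisj⟩ := huhat
  obtain ⟨_, hcase⟩ := hF
  rcases hcase with ⟨hσ, hu'eq⟩ | ⟨hσ, hum, hu'eq⟩
  · -- σ = true
    subst hu'eq
    refine ⟨oneStep m uhat, ⟨⟨⟨hh1, hhmono⟩, hhdisj⟩, Or.inl ⟨hσ, rfl⟩⟩, ?_, ?_, ?_⟩
    · exact ⟨fun i => le_trans (Nat.sub_le _ _) (hu1 i),
        fun i j hij => Nat.sub_le_sub_right (humono i j hij) 1⟩
    · refine ⟨⟨fun i => le_trans (Nat.sub_le _ _) (hh1 i),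
        fun i j hij => Nat.sub_le_sub_right (hhmono i j hij) 1⟩, ?_⟩
      rcases hhdisj with hmod | hlast
      · by_cases h1 : uhat ⟨1, by omega⟩ = 0
        · right
          have hle : uhat ⟨m - 1, by omega⟩ ≤ uhat ⟨1, by omega⟩ :=
            hhmono _ _ (by simp [Fin.le_def]; omega)
          simp only [oneStep]; omega
        · left
          have hle : uhat ⟨1, by omega⟩ ≤ uhat ⟨0, by omega⟩ :=
            hhmono _ _ (by simp [Fin.le_def])
          have : uhat ⟨0, by omega⟩ - 1 - (uhat ⟨1, by omega⟩ - 1)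
              = uhat ⟨0, by omega⟩ - uhat ⟨1, by omega⟩ := by omega
          simpa only [oneStep, this] using hmod
      · right; simp only [oneStep]; omega
    · exact fun i => Nat.sub_le_sub_right (hR i) 1
  · -- σ = false
    subst hu'eq
    have hhm : uhat ⟨m - 1, by omega⟩ = 0 := by
      have := hR ⟨m - 1, by omega⟩
      have := hum
      omega
    have ha : uhat ⟨0, by omega⟩ ≤ k - m := hh1 _
    have hmodle : (k - m - uhat ⟨0, by omega⟩) % c ≤ k - m - uhat ⟨0, by omega⟩ :=
      Nat.mod_le _ _
    refine ⟨zeroStepC k m c hm uhat,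
      ⟨⟨⟨hh1, hhmono⟩, hhdisj⟩, Or.inr ⟨hσ, hhm, rfl⟩⟩, ?_, ?_, ?_⟩
    · -- zeroStep ∈ Uset
      refine ⟨fun i => ?_, fun i j hij => ?_⟩
      · by_cases hi : (i : ℕ) = 0
        · rw [zeroStep_pos k m u i hi]
        · rw [zeroStep_ne k m u i hi]; exact hu1 _
      · by_cases hj : (j : ℕ) = 0
        · have hi : (i : ℕ) = 0 := by have := Fin.le_def.mp hij; omega
          rw [zeroStep_pos k m u i hi, zeroStep_pos k m u j hj]
        · rw [zeroStep_ne k m u j hj]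
          by_cases hi : (i : ℕ) = 0
          · rw [zeroStep_pos k m u i hi]; exact hu1 _
          · rw [zeroStep_ne k m u i hi]
            exact humono _ _ (by have := Fin.le_def.mp hij; simp only [Fin.le_def]; omega)
    · -- zeroStepC ∈ Ucset
      refine ⟨⟨fun i => ?_, fun i j hij => ?_⟩, ?_⟩
      · by_cases hi : (i : ℕ) = 0
        · rw [zeroStepC_pos k m c hm uhat i hi]; split
          · exact le_rfl
          · exact Nat.sub_le _ _
        · rw [zeroStepC_ne k m c hm uhat i hi]; exact hh1 _
      · by_cases hj : (j : ℕ) = 0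
        · have hi : (i : ℕ) = 0 := by have := Fin.le_def.mp hij; omega
          rw [zeroStepC_pos k m c hm uhat i hi, zeroStepC_pos k m c hm uhat j hj]
        · rw [zeroStepC_ne k m c hm uhat j hj]
          by_cases hi : (i : ℕ) = 0
          · rw [zeroStepC_pos k m c hm uhat i hi]
            have h1 : uhat ⟨(j : ℕ) - 1, lt_of_le_of_lt (Nat.sub_le _ _) j.isLt⟩
                ≤ uhat ⟨0, by omega⟩ := hhmono _ _ (by simp [Fin.le_def])
            split
            · exact le_trans h1 ha
            · omega
          · rw [zeroStepC_ne k m c hm uhat i hi]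
            exact hhmono _ _ (by have := Fin.le_def.mp hij; simp only [Fin.le_def]; omega)
      · -- the compression invariant
        by_cases h2 : uhat ⟨m - 2, by omega⟩ = 0
        · exact Or.inr (zeroStepC_inv_right k m c hm uhat h2)
        · exact Or.inl (zeroStepC_inv_left k m c hm uhat h2 ha)
    · -- componentwise bound
      intro i
      by_cases hi : (i : ℕ) = 0
      · rw [zeroStepC_pos k m c hm uhat i hi, zeroStep_pos k m u i hi]
        split
        · exact le_rfl
        · exact Nat.sub_le _ _
      · rw [zeroStepC_ne k m c hm uhat i hi, zeroStep_ne k m u i hi]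
        exact hR _
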